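/- Main recursion formula: let n ≥ 2 be a natural number, p₁ a prime dividing n with multiplicity n₁, and write n = p₁^{n₁} · m with p₁ ∤ m. Then in ℚ: p*(n) · n₁ = ∑_{i=1}^{n₁} i · ( ∑_{d ∣ m} λ(p₁^{i} · d) · p*( n / (p₁^{i} · d) ) ), where for a natural number e ≥ 2, c(e) is the greatest common divisor of the exponents in the prime factorization of e and λ(e) = ∑_{j ∣ c(e)} 1/j. -/

import Mathlib

/-- The number of unordered factorizations of `m`: the number of multisets of
natural numbers, all at least `2`, whose product is `m`. -/
noncomputable def numFactorizations (m : ℕ) : ℕ :=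
  Nat.card {s : Multiset ℕ // (∀ x ∈ s, 2 ≤ x) ∧ s.prod = m}

/-- `c(e)`: the gcd of the exponents in the prime factorization of `e`. -/
def expGcd (e : ℕ) : ℕ :=
  e.primeFactors.gcd fun p => e.factorization p

/-- `λ(e) = ∑_{j ∣ c(e)} 1/j`. -/
noncomputable def lam (e : ℕ) : ℚ :=
  ∑ j ∈ (expGcd e).divisors, (1 : ℚ) / j

/-!
For a factorization `s` of `n`, `v_p(n) = ∑_{e ∈ s} v_p(e)`. Summing over all factorizations
and observing that those containing `e` at least `k` times correspond to the factorizations of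
`n / e^k` gives `p*(n) v_p(n) = ∑_{k ≥ 1, e^k ∣ n} v_p(e) p*(n / e^k)`. Grouping the terms by
`g = e^k` and writing `v_p(e) = v_p(g) / k`, where `g` is a `k`-th power exactly when `k ∣ c(g)`,
turns this into `p*(n) v_p(n) = ∑_{g ∣ n} v_p(g) λ(g) p*(n / g)`. For `n = p^{n₁} m` with `p ∤ m`,
the divisors `g` with `v_p(g) = i` are the `p^i d` with `d ∣ m`.
-/

open Finset

lemma Multiset.card_lt_prod_of_forall_two_le {s : Multiset ℕ} (hs : ∀ x ∈ s, 2 ≤ x) :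
    Multiset.card s < s.prod :=
  (Nat.lt_two_pow_self).trans_le (Multiset.pow_card_le_prod hs)

lemma finite_setOf_factorizations (n : ℕ) :
    {s : Multiset ℕ | (∀ x ∈ s, 2 ≤ x) ∧ s.prod = n}.Finite := by
  refine (n • n.divisors.val).powerset.finite_toSet.subset fun s ⟨hs, hprod⟩ => ?_
  have hn : n ≠ 0 := hprod ▸ Nat.ne_zero_of_lt (Multiset.card_lt_prod_of_forall_two_le hs)
  rw [Set.mem_ofPred_eq, Multiset.mem_powerset, Multiset.le_iff_count]
  intro e
  by_cases he : e ∈ s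
  · have he_dvd : e ∈ n.divisors := Nat.mem_divisors.2 ⟨hprod ▸ Multiset.dvd_prod he, hn⟩
    rw [Multiset.count_nsmul, Multiset.count_eq_one_of_mem n.divisors.nodup he_dvd, mul_one]
    exact (Multiset.count_le_card e s).trans
      (hprod ▸ (Multiset.card_lt_prod_of_forall_two_le hs).le)
  · simp [Multiset.count_eq_zero_of_notMem he]

noncomputable def factorizations (n : ℕ) : Finset (Multiset ℕ) :=
  (finite_setOf_factorizations n).toFinset

lemma mem_factorizations {n : ℕ} {s : Multiset ℕ} :
    s ∈ factorizations n ↔ (∀ x ∈ s, 2 ≤ x) ∧ s.prod = n := by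
  simp [factorizations]

lemma numFactorizations_eq_card (n : ℕ) : numFactorizations n = #(factorizations n) :=
  (Nat.card_coe_set_eq _).trans (Set.ncard_eq_toFinset_card _ (finite_setOf_factorizations n))

lemma factorization_eq_sum_count_smul {n : ℕ} {s : Multiset ℕ} (hs : s ∈ factorizations n) :
    n.factorization = ∑ e ∈ n.divisors, s.count e • e.factorization := by
  obtain ⟨h2, hprod⟩ := mem_factorizations.1 hs
  have hn : n ≠ 0 := hprod ▸ Nat.ne_zero_of_lt (Multiset.card_lt_prod_of_forall_two_le h2)
  have hne : ∀ e ∈ s.toFinset, e ^ s.count e ≠ 0 := fun e he =>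
    pow_ne_zero _ (by have := h2 e (Multiset.mem_toFinset.1 he); omega)
  conv_lhs => rw [← hprod, Finset.prod_multiset_count, Nat.factorization_prod hne]
  simp_rw [Nat.factorization_pow]
  refine sum_subset (fun e he => ?_) fun e _ he => ?_
  · exact Nat.mem_divisors.2 ⟨hprod ▸ Multiset.dvd_prod (Multiset.mem_toFinset.1 he), hn⟩
  · rw [Multiset.count_eq_zero_of_notMem (Multiset.mem_toFinset.not.1 he), zero_smul]

-- Removing `k` copies of `e` is a bijection onto the factorizations of `n / e ^ k`.
lemma card_filter_le_count_factorizations (n k : ℕ) {e : ℕ} (he : 2 ≤ e) :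
    #{s ∈ factorizations n | k ≤ s.count e} =
      if e ^ k ∣ n then #(factorizations (n / e ^ k)) else 0 := by
  set r := Multiset.replicate k e
  split_ifs with hdvd
  · refine card_nbij' (· - r) (· + r) (fun s hs => ?_) (fun t ht => ?_)
      (fun s hs => ?_) (fun t _ => add_tsub_cancel_right t r)
    · obtain ⟨hs, hk⟩ := mem_filter.1 hs
      obtain ⟨h2, hprod⟩ := mem_factorizations.1 hs
      have hsplit : s - r + r = s :=
        tsub_add_cancel_of_le (Multiset.le_count_iff_replicate_le.1 hk)
      refine mem_factorizations.2
        ⟨fun x hx => h2 x (Multiset.mem_of_le (Multiset.sub_le_self s r) hx), ?_⟩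
      rw [← hprod, ← hsplit, Multiset.prod_add, Multiset.prod_replicate, hsplit,
        Nat.mul_div_cancel _ (pow_pos (by omega) k)]
    · obtain ⟨h2, hprod⟩ := mem_factorizations.1 ht
      refine mem_filter.2 ⟨mem_factorizations.2 ⟨fun x hx => ?_, ?_⟩, ?_⟩
      · rcases Multiset.mem_add.1 hx with hx | hx
        exacts [h2 x hx, Multiset.eq_of_mem_replicate hx ▸ he]
      · rw [Multiset.prod_add, Multiset.prod_replicate, hprod, Nat.div_mul_cancel hdvd]
      · simp [r]
    · exact tsub_add_cancel_of_le (Multiset.le_count_iff_replicate_le.1 (mem_filter.1 hs).2)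
  · refine card_eq_zero.2 (filter_eq_empty_iff.2 fun s hs hk => hdvd ?_)
    rw [← (mem_factorizations.1 hs).2, ← Multiset.prod_replicate]
    exact Multiset.prod_dvd_prod_of_le (Multiset.le_count_iff_replicate_le.1 hk)

lemma sum_eq_sum_Icc_card_filter_le {ι : Type*} (s : Finset ι) (f : ι → ℕ) {N : ℕ}
    (hf : ∀ i ∈ s, f i ≤ N) : ∑ i ∈ s, f i = ∑ k ∈ Icc 1 N, #{i ∈ s | k ≤ f i} := by
  simp_rw [card_filter]
  rw [sum_comm]
  refine sum_congr rfl fun i hi => ?_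
  have hfilter : {k ∈ Icc 1 N | k ≤ f i} = Icc 1 (f i) := by
    ext k
    simp only [mem_filter, mem_Icc]
    have := hf i hi
    omega
  rw [sum_boole, Nat.cast_id, hfilter, Nat.card_Icc, Nat.add_sub_cancel]

lemma sum_count_factorizations (n : ℕ) {e : ℕ} (he : 2 ≤ e) :
    ∑ s ∈ factorizations n, s.count e =
      ∑ k ∈ Icc 1 n, if e ^ k ∣ n then #(factorizations (n / e ^ k)) else 0 := by
  have hcount : ∀ s ∈ factorizations n, s.count e ≤ n := fun s hs => by
    obtain ⟨h2, hprod⟩ := mem_factorizations.1 hs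
    exact (Multiset.count_le_card e s).trans
      (hprod ▸ (Multiset.card_lt_prod_of_forall_two_le h2).le)
  rw [sum_eq_sum_Icc_card_filter_le _ _ hcount]
  simp_rw [card_filter_le_count_factorizations n _ he]

lemma card_factorizations_mul_factorization (n p : ℕ) :
    #(factorizations n) * n.factorization p = ∑ e ∈ n.divisors, ∑ k ∈ Icc 1 n,
      if e ^ k ∣ n then e.factorization p * #(factorizations (n / e ^ k)) else 0 := by
  calc #(factorizations n) * n.factorization p
      = ∑ s ∈ factorizations n, ∑ e ∈ n.divisors, s.count e * e.factorization p := by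
        rw [← smul_eq_mul, ← sum_const]
        refine sum_congr rfl fun s hs => ?_
        simp [factorization_eq_sum_count_smul hs, Finsupp.finsetSum_apply]
    _ = ∑ e ∈ n.divisors, e.factorization p * ∑ s ∈ factorizations n, s.count e := by
        rw [sum_comm]
        simp_rw [mul_sum, mul_comm]
    _ = _ := by
        refine sum_congr rfl fun e he => ?_
        rcases eq_or_ne e 1 with rfl | he1
        · simp
        · have he2 : 2 ≤ e := by have := Nat.pos_of_mem_divisors he; omega
          rw [sum_count_factorizations n he2, mul_sum]
          simp_rw [mul_ite, mul_zero]

lemma expGcd_eq_zero_iff {g : ℕ} : expGcd g = 0 ↔ g ≤ 1 := by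
  rw [expGcd, Finset.gcd_eq_zero_iff]
  constructor
  · intro h
    by_contra hg
    obtain ⟨p, hp⟩ := Nat.nonempty_primeFactors.2 (not_le.1 hg)
    exact Finsupp.mem_support_iff.1 (Nat.support_factorization g ▸ hp) (h p hp)
  · intro hg p hp
    simp [Nat.primeFactors_eq_empty.2 (by omega : g = 0 ∨ g = 1)] at hp

lemma dvd_expGcd_iff_exists_pow_eq {g k : ℕ} (hg : g ≠ 0) :
    k ∣ expGcd g ↔ ∃ e, e ^ k = g := by
  constructor
  · intro hk
    have hdvd : ∀ p ∈ g.factorization.support, k ∣ g.factorization p := fun p hp =>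
      hk.trans (Finset.gcd_dvd (Nat.support_factorization g ▸ hp))
    refine ⟨g.factorization.prod fun p t => p ^ (t / k), ?_⟩
    conv_rhs => rw [← Nat.prod_factorization_pow_eq_self hg]
    rw [Finsupp.prod, Finsupp.prod, ← Finset.prod_pow]
    exact prod_congr rfl fun p hp => by rw [← pow_mul, Nat.div_mul_cancel (hdvd p hp)]
  · rintro ⟨e, rfl⟩
    refine Finset.dvd_gcd fun p _ => ?_
    simp [Nat.factorization_pow]

-- `(e, k) ↦ (e ^ k, k)`; the terms with `e = 1` have no image since `expGcd 1 = 0`.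
lemma sum_sum_pow_dvd_eq_sum_sum_divisors_expGcd {M : Type*} [AddCommMonoid M] (n : ℕ)
    (f : ℕ → ℕ → M) (hf : ∀ k, f 1 k = 0) :
    ∑ e ∈ n.divisors, ∑ k ∈ Icc 1 n, (if e ^ k ∣ n then f (e ^ k) k else 0) =
      ∑ g ∈ n.divisors, ∑ j ∈ (expGcd g).divisors, f g j := by
  rw [← sum_product', sum_sigma']
  refine sum_bij_ne_zero (fun x _ _ => ⟨x.1 ^ x.2, x.2⟩) ?_ ?_ ?_ ?_
  · rintro ⟨e, k⟩ hx hne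
    obtain ⟨⟨-, hn⟩, hk, -⟩ := by
      simpa only [mem_product, mem_Icc, Nat.mem_divisors] using hx
    have hdvd : e ^ k ∣ n := by by_contra h; simp [h] at hne
    have he1 : e ≠ 1 := by rintro rfl; simp [hf] at hne
    have he0 : e ≠ 0 := by
      rintro rfl
      rw [zero_pow (by omega), zero_dvd_iff] at hdvd
      exact hn hdvd
    simp only [mem_sigma, Nat.mem_divisors]
    refine ⟨⟨hdvd, hn⟩, (dvd_expGcd_iff_exists_pow_eq (pow_ne_zero k he0)).2 ⟨e, rfl⟩, ?_⟩
    exact expGcd_eq_zero_iff.not.2 (not_le.2 (Nat.one_lt_pow (by omega) (by omega)))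
  · rintro ⟨e₁, k₁⟩ hx₁ - ⟨e₂, k₂⟩ - - h
    simp only [Sigma.mk.inj_iff, heq_eq_eq] at h
    obtain ⟨hpow, rfl⟩ := h
    have hk : k₁ ≠ 0 := by simp only [mem_product, mem_Icc] at hx₁; omega
    rw [Nat.pow_left_injective hk hpow]
  · rintro ⟨g, j⟩ hx hne
    obtain ⟨⟨hgn, hn⟩, hj, hgcd⟩ := by
      simpa only [mem_sigma, Nat.mem_divisors] using hx
    have hg1 : 1 < g := not_le.1 (expGcd_eq_zero_iff.not.1 hgcd)
    obtain ⟨e, rfl⟩ := (dvd_expGcd_iff_exists_pow_eq (by omega)).1 hj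
    have hj0 : j ≠ 0 := by rintro rfl; simp at hg1
    have he1 : 1 < e := by
      by_contra he
      interval_cases e <;> simp [zero_pow hj0] at hg1
    refine ⟨(e, j), ?_, by simpa [hgn] using hne, rfl⟩
    simp only [mem_product, mem_Icc, Nat.mem_divisors]
    exact ⟨⟨(dvd_pow_self e hj0).trans hgn, hn⟩, by omega,
      (Nat.lt_pow_self he1).le.trans (Nat.le_of_dvd (by omega) hgn)⟩
  · rintro ⟨e, k⟩ - hne
    have hdvd : e ^ k ∣ n := by by_contra h; simp [h] at hne
    simp [hdvd]

lemma factorization_pow_mul_of_not_dvd {p d : ℕ} (i : ℕ) (hp : p.Prime) (hpd : ¬ p ∣ d) :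
    (p ^ i * d).factorization p = i := by
  have hd : d ≠ 0 := by rintro rfl; exact hpd (dvd_zero p)
  rw [Nat.factorization_mul (pow_ne_zero i hp.ne_zero) hd, Finsupp.add_apply,
    hp.factorization_pow, Finsupp.single_eq_same, Nat.factorization_eq_zero_of_not_dvd hpd,
    add_zero]

lemma sum_divisors_prime_pow_mul {M : Type*} [AddCommMonoid M] {p m : ℕ} (a : ℕ)
    (hp : p.Prime) (hpm : ¬ p ∣ m) (f : ℕ → M) :
    ∑ g ∈ (p ^ a * m).divisors, f g =
      ∑ i ∈ range (a + 1), ∑ d ∈ m.divisors, f (p ^ i * d) := by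
  rw [Nat.Coprime.divisors_mul (((Nat.Prime.coprime_iff_not_dvd hp).2 hpm).pow_left a), sum_map]
  refine (sum_attach _ fun x : ℕ × ℕ => f (x.1 * x.2)).trans ?_
  rw [sum_product, Nat.sum_divisors_prime_pow hp]

lemma numFactorizations_mul_factorization (n p : ℕ) :
    (numFactorizations n : ℚ) * n.factorization p =
      ∑ g ∈ n.divisors, (g.factorization p : ℚ) * (lam g * numFactorizations (n / g)) := by
  have hcount := card_factorizations_mul_factorization n p
  simp only [← numFactorizations_eq_card] at hcount
  calc (numFactorizations n : ℚ) * n.factorization p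
      = ∑ e ∈ n.divisors, ∑ k ∈ Icc 1 n, if e ^ k ∣ n then
          ((e ^ k).factorization p / k : ℚ) * numFactorizations (n / e ^ k) else 0 := by
        rw [← Nat.cast_mul, hcount]
        push_cast
        refine sum_congr rfl fun e _ => sum_congr rfl fun k hk => ?_
        have hk0 : (k : ℚ) ≠ 0 := by
          simp only [mem_Icc] at hk
          exact_mod_cast (by omega : k ≠ 0)
        rw [Nat.factorization_pow, Finsupp.smul_apply, smul_eq_mul, Nat.cast_mul,
          mul_div_cancel_left₀ _ hk0]
    _ = ∑ g ∈ n.divisors, ∑ j ∈ (expGcd g).divisors,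
          (g.factorization p / j : ℚ) * numFactorizations (n / g) :=
        sum_sum_pow_dvd_eq_sum_sum_divisors_expGcd n
          (fun g j => (g.factorization p / j : ℚ) * numFactorizations (n / g)) fun k => by simp
    _ = ∑ g ∈ n.divisors, (g.factorization p : ℚ) * (lam g * numFactorizations (n / g)) := by
        refine sum_congr rfl fun g _ => ?_
        rw [lam, sum_mul, mul_sum]
        exact sum_congr rfl fun j _ => by ring

theorem stmt11_general (n : ℕ) (p₁ : ℕ) (hp₁ : p₁.Prime)
    (n₁ : ℕ)
    (m : ℕ) (hm : n = p₁ ^ n₁ * m) (hpm : ¬ p₁ ∣ m) :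
    (numFactorizations n : ℚ) * (n₁ : ℚ) =
      ∑ i ∈ Finset.Icc 1 n₁, (i : ℚ) *
        ∑ d ∈ m.divisors,
          lam (p₁ ^ i * d) * numFactorizations (n / (p₁ ^ i * d)) := by
  have hn₁ : n.factorization p₁ = n₁ := hm ▸ factorization_pow_mul_of_not_dvd n₁ hp₁ hpm
  calc (numFactorizations n : ℚ) * n₁
      = ∑ g ∈ n.divisors, (g.factorization p₁ : ℚ) * (lam g * numFactorizations (n / g)) := by
        rw [← hn₁, numFactorizations_mul_factorization]
    _ = ∑ i ∈ range (n₁ + 1), ∑ d ∈ m.divisors,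
          (i : ℚ) * (lam (p₁ ^ i * d) * numFactorizations (n / (p₁ ^ i * d))) := by
        rw [congrArg Nat.divisors hm, sum_divisors_prime_pow_mul n₁ hp₁ hpm]
        refine sum_congr rfl fun i _ => sum_congr rfl fun d hd => ?_
        have hpd : ¬ p₁ ∣ d := fun h => hpm (h.trans (Nat.dvd_of_mem_divisors hd))
        rw [factorization_pow_mul_of_not_dvd i hp₁ hpd]
    _ = _ := by
        simp_rw [← mul_sum]
        refine (sum_subset (fun i hi => ?_) fun i hi hi' => ?_).symm
        · simp only [mem_Icc, mem_range] at hi ⊢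
          omega
        · obtain rfl : i = 0 := by simp only [mem_Icc, mem_range] at hi hi'; omega
          simp

/-- Main recursion formula: for `n ≥ 2`, a prime `p₁` dividing
`n` with multiplicity `n₁`, and `n = p₁^{n₁} · m` with `p₁ ∤ m`,
`p*(n) · n₁ = ∑_{i=1}^{n₁} i · (∑_{d ∣ m} λ(p₁^i d) · p*(n / (p₁^i d)))` in `ℚ`. -/
theorem stmt11 (n : ℕ) (hn : 2 ≤ n) (p₁ : ℕ) (hp₁ : p₁.Prime) (hdvd : p₁ ∣ n)
    (n₁ : ℕ) (hn₁ : n₁ = n.factorization p₁)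
    (m : ℕ) (hm : n = p₁ ^ n₁ * m) (hpm : ¬ p₁ ∣ m) :
    (numFactorizations n : ℚ) * (n₁ : ℚ) =
      ∑ i ∈ Finset.Icc 1 n₁, (i : ℚ) *
        ∑ d ∈ m.divisors,
          lam (p₁ ^ i * d) * numFactorizations (n / (p₁ ^ i * d)) :=
  stmt11_general n p₁ hp₁ n₁ m hm hpm
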